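/- If every closed factor of a word w of length n is a palindrome, then the set of closed factors of w equals the set of palindromic factors of w, both sets have cardinality n + 1, and in particular w is rich. -/

import Mathlib

variable {α : Type*}

/-- `u` is a factor (contiguous subword) of `w`. -/
def IsFactor (u w : List α) : Prop := ∃ v z : List α, w = v ++ u ++ z

/-- `u` is a border of `w`: a word different from `w` that is both a prefix and a suffix. -/
def IsBorder (u w : List α) : Prop := u ≠ w ∧ u <+: w ∧ u <:+ w

/-- `u` has an internal occurrence in `w`. -/
def HasInternalOcc (u w : List α) : Prop :=
  ∃ v z : List α, v ≠ [] ∧ z ≠ [] ∧ w = v ++ u ++ z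

/-- A word is closed if it is empty or has a border with no internal occurrence. -/
def ClosedWord (w : List α) : Prop :=
  w = [] ∨ ∃ u : List α, IsBorder u w ∧ ¬ HasInternalOcc u w

/-- The set of closed factors of `w`. -/
def closedFactors (w : List α) : Set (List α) := {u | IsFactor u w ∧ ClosedWord u}

/-- A word is CR-poor if it has exactly `|w| + 1` closed factors. -/
def IsCRPoor (w : List α) : Prop := (closedFactors w).ncard = w.length + 1

/-- `w` is a complete return to `u`: exactly two occurrences of `u` in `w`,
one as a prefix and one as a suffix. -/
def IsCompleteReturn (u w : List α) : Prop :=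
  u <+: w ∧ u <:+ w ∧ {i : ℕ | i + u.length ≤ w.length ∧ u <+: w.drop i}.ncard = 2

/-- The set of palindromic factors of `w`. -/
def palFactors (w : List α) : Set (List α) := {u | IsFactor u w ∧ u.reverse = u}

/-- `k`-fold concatenation power of a word. -/
def listPow (u : List α) : ℕ → List α
  | 0 => []
  | k + 1 => u ++ listPow u k

/-- A word is primitive if it is nonempty and not a power `u^k` with `k ≥ 2`. -/
def Primitive (v : List α) : Prop :=
  v ≠ [] ∧ ∀ (u : List α) (k : ℕ), 2 ≤ k → v ≠ listPow u k

/-- `p` is a period of `w`. -/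
def HasPeriod (w : List α) (p : ℕ) : Prop := 0 < p ∧ p ≤ w.length ∧ w.drop p <+: w

/-! At most one palindromic factor has its first occurrence ending at a given position `i`: a
shorter palindromic suffix of a longer palindrome is also its prefix, hence occurs earlier.
Dually, every prefix `w.take i` contributes a distinct closed factor, its longest closed suffix:
if that suffix `u` occurred earlier, the factor running from its last earlier occurrence to the
end of the prefix would be a complete return to `u`, a longer closed suffix. Hence
`|PAL(w)| ≤ |w| + 1 ≤ |C(w)|`, and if all closed factors are palindromes, `C(w) ⊆ PAL(w)`
forces equality throughout. -/

lemma isFactor_iff_isInfix {u w : List α} : IsFactor u w ↔ u <:+: w := by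
  constructor <;> rintro ⟨v, z, h⟩ <;> exact ⟨v, z, h.symm⟩

lemma setOf_isFactor_finite (w : List α) : {u : List α | IsFactor u w}.Finite := by
  refine w.sublists.finite_toSet.subset fun u hu => ?_
  simpa [List.mem_sublists] using (isFactor_iff_isInfix.mp hu).sublist

lemma palFactors_finite (w : List α) : (palFactors w).Finite :=
  (setOf_isFactor_finite w).subset fun _ hu => hu.1

lemma closedFactors_finite (w : List α) : (closedFactors w).Finite :=
  (setOf_isFactor_finite w).subset fun _ hu => hu.1

lemma isSuffix_take_of_append_isSuffix {u t p : List α} (h : u ++ t <:+ p) :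
    u <:+ p.take (p.length - t.length) := by
  obtain ⟨a, rfl⟩ := h
  have hlen : (a ++ (u ++ t)).length - t.length = (a ++ u).length := by simp; omega
  rw [hlen, ← List.append_assoc, List.take_left]
  exact List.suffix_append a u

lemma isPrefix_of_isSuffix_of_reverse_eq {u v : List α} (hu : u.reverse = u) (hv : v.reverse = v)
    (h : u <:+ v) : u <+: v := by
  simpa only [hu, hv] using List.reverse_prefix.mpr h

noncomputable def firstEnd (w u : List α) : ℕ := sInf {i | u <:+ w.take i}

lemma exists_isSuffix_take {u w : List α} (hu : IsFactor u w) :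
    ∃ i ≤ w.length, u <:+ w.take i := by
  obtain ⟨v, z, rfl⟩ := hu
  refine ⟨(v ++ u).length, by simp, ?_⟩
  rw [List.take_left]
  exact List.suffix_append v u

lemma isSuffix_take_firstEnd {u w : List α} (hu : IsFactor u w) : u <:+ w.take (firstEnd w u) :=
  have ⟨i, _, hi⟩ := exists_isSuffix_take hu
  Nat.sInf_mem (s := {i | u <:+ w.take i}) ⟨i, hi⟩

lemma firstEnd_le_length {u w : List α} (hu : IsFactor u w) : firstEnd w u ≤ w.length :=
  have ⟨_, hi, hui⟩ := exists_isSuffix_take hu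
  (Nat.sInf_le hui).trans hi

lemma eq_of_firstEnd_eq_of_isSuffix {u v w : List α} (hu : u ∈ palFactors w)
    (hv : v ∈ palFactors w) (hend : firstEnd w u = firstEnd w v) (huv : u <:+ v) : u = v := by
  obtain ⟨t, rfl⟩ := isPrefix_of_isSuffix_of_reverse_eq hu.2 hv.2 huv
  set i := firstEnd w u
  have hvi : u ++ t <:+ w.take i := hend ▸ isSuffix_take_firstEnd hv.1
  have hearlier : u <:+ w.take (i - t.length) := by
    have := isSuffix_take_of_append_isSuffix hvi
    rwa [List.take_take, List.length_take, min_eq_left (firstEnd_le_length hu.1),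
      min_eq_left (Nat.sub_le _ _)] at this
  have hle : i ≤ i - t.length := Nat.sInf_le hearlier
  have ht : (u ++ t).length ≤ i := hvi.length_le.trans (List.length_take_le _ _)
  rw [List.length_append] at ht
  have : t = [] := List.eq_nil_of_length_eq_zero (by omega)
  simp [this]

lemma palFactors_ncard_le (w : List α) : (palFactors w).ncard ≤ w.length + 1 := by
  rw [← Set.ncard_Iic_nat]
  refine Set.ncard_le_ncard_of_injOn (firstEnd w) (fun u hu => firstEnd_le_length hu.1)
    (fun u hu v hv huv => ?_) (Set.finite_Iic _)
  have hus := isSuffix_take_firstEnd hu.1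
  have hvs : v <:+ w.take (firstEnd w u) := huv ▸ isSuffix_take_firstEnd hv.1
  rcases List.suffix_or_suffix_of_suffix hus hvs with h | h
  · exact eq_of_firstEnd_eq_of_isSuffix hu hv huv h
  · exact (eq_of_firstEnd_eq_of_isSuffix hv hu huv.symm h).symm

lemma exists_longer_closed_suffix {u p s t : List α} (hu : u <:+ p) (hocc : p = s ++ u ++ t)
    (ht : t ≠ []) : ∃ v, v <:+ p ∧ ClosedWord v ∧ u.length < v.length := by
  classical
  obtain ⟨a, rfl⟩ := hu
  have hlen : a.length = s.length + t.length := by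
    have := congrArg List.length hocc
    simp only [List.length_append] at this
    omega
  have htpos : 0 < t.length := List.length_pos_iff.mpr ht
  let occ : ℕ → Prop := fun m => u <+: (a ++ u).drop m
  have hocc_s : occ s.length := by
    simp only [occ, hocc, List.append_assoc, List.drop_left]
    exact List.prefix_append u t
  -- the last occurrence of `u` that is not the suffix one
  set m := Nat.findGreatest occ (a.length - 1)
  have hm : occ m := Nat.findGreatest_spec (m := s.length) (by omega) hocc_s
  have hma : m < a.length := by
    have := Nat.findGreatest_le (P := occ) (a.length - 1)
    omega
  have hdrop : (a ++ u).drop m = a.drop m ++ u := List.drop_append_of_le_length hma.le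
  have hlonger : u.length < ((a ++ u).drop m).length := by
    rw [hdrop, List.length_append, List.length_drop]; omega
  refine ⟨(a ++ u).drop m, List.drop_suffix _ _, Or.inr ⟨u, ⟨?_, hm, ?_⟩, ?_⟩, hlonger⟩
  · exact ne_of_apply_ne List.length hlonger.ne
  · rw [hdrop]; exact List.suffix_append _ _
  · rintro ⟨x, y, hx, hy, hxy⟩
    have hxlen : a.length - m + u.length = x.length + u.length + y.length := by
      have := congrArg List.length hxy
      rwa [hdrop, List.length_append, List.length_drop, List.length_append,
        List.length_append] at this
    have hocc_x : occ (m + x.length) := by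
      simp only [occ, ← List.drop_drop, hxy, List.append_assoc, List.drop_left]
      exact List.prefix_append u y
    have hxpos : 0 < x.length := List.length_pos_iff.mpr hx
    have hypos : 0 < y.length := List.length_pos_iff.mpr hy
    exact Nat.findGreatest_is_greatest (n := a.length - 1) (by omega) (by omega) hocc_x

noncomputable def longestClosedSuffix (p : List α) : List α :=
  p.drop (sInf {k | ClosedWord (p.drop k)})

lemma longestClosedSuffix_isSuffix (p : List α) : longestClosedSuffix p <:+ p :=
  List.drop_suffix _ _

lemma longestClosedSuffix_closed (p : List α) : ClosedWord (longestClosedSuffix p) :=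
  Nat.sInf_mem (s := {k | ClosedWord (p.drop k)}) ⟨p.length, by simp [ClosedWord]⟩

lemma length_le_longestClosedSuffix {v p : List α} (hv : v <:+ p) (hc : ClosedWord v) :
    v.length ≤ (longestClosedSuffix p).length := by
  obtain ⟨a, rfl⟩ := hv
  have : sInf {k | ClosedWord ((a ++ v).drop k)} ≤ a.length := Nat.sInf_le (by simpa using hc)
  simp only [longestClosedSuffix, List.length_drop, List.length_append]
  omega

lemma longestClosedSuffix_append_ne (p : List α) {r : List α} (hr : r ≠ []) :
    longestClosedSuffix (p ++ r) ≠ longestClosedSuffix p := by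
  intro heq
  obtain ⟨s, hs⟩ := longestClosedSuffix_isSuffix p
  obtain ⟨v, hv, hvc, hlt⟩ := exists_longer_closed_suffix (longestClosedSuffix_isSuffix (p ++ r))
    (by rw [heq, hs]) hr
  exact (length_le_longestClosedSuffix hv hvc).not_gt hlt

lemma injOn_longestClosedSuffix_take (w : List α) :
    Set.InjOn (fun i => longestClosedSuffix (w.take i)) (Set.Iic w.length) := by
  have hne : ∀ i j, i < j → j ≤ w.length →
      longestClosedSuffix (w.take j) ≠ longestClosedSuffix (w.take i) := by
    intro i j hij hj
    have hsplit : w.take j = w.take i ++ (w.take j).drop i := by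
      have := List.take_append_drop i (w.take j)
      rw [List.take_take, min_eq_left hij.le] at this
      exact this.symm
    rw [hsplit]
    refine longestClosedSuffix_append_ne _ fun hnil => ?_
    have := congrArg List.length hnil
    simp only [List.length_drop, List.length_take, List.length_nil] at this
    omega
  intro i hi j hj heq
  rcases lt_trichotomy i j with hij | rfl | hji
  · exact absurd heq.symm (hne i j hij hj)
  · rfl
  · exact absurd heq (hne j i hji hi)

lemma length_add_one_le_closedFactors_ncard (w : List α) :
    w.length + 1 ≤ (closedFactors w).ncard := by
  rw [← Set.ncard_Iic_nat]
  refine Set.ncard_le_ncard_of_injOn (fun i => longestClosedSuffix (w.take i))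
    (fun i _ => ⟨?_, longestClosedSuffix_closed _⟩) ?_ (closedFactors_finite w)
  · exact isFactor_iff_isInfix.mpr
      ((longestClosedSuffix_isSuffix _).isInfix.trans (List.take_prefix i w).isInfix)
  · exact injOn_longestClosedSuffix_take w

/-- If every closed factor of w is a palindrome, then C(w) = PAL(w), both of
cardinality |w| + 1; in particular w is rich. -/
theorem stmt_8 {α : Type*} (w : List α)
    (h : ∀ u ∈ closedFactors w, u.reverse = u) :
    closedFactors w = palFactors w ∧
      (closedFactors w).ncard = w.length + 1 ∧
      (palFactors w).ncard = w.length + 1 := by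
  have hsub : closedFactors w ⊆ palFactors w := fun u hu => ⟨hu.1, h u hu⟩
  have hpal := palFactors_ncard_le w
  have hclosed := length_add_one_le_closedFactors_ncard w
  have hmono := Set.ncard_le_ncard hsub (palFactors_finite w)
  exact ⟨Set.eq_of_subset_of_ncard_le hsub (by omega) (palFactors_finite w), by omega, by omega⟩
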